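/- arXiv:1303.3413 — 5 statements merged into one kernel-verified Lean document; each statement's English description precedes it below -/
import Mathlib

section
/- If Y is a nonnegative random variable with P(Y > x) = x^{-β} L(x) for x large, where L is slowly varying, and T is a positive random variable independent of Y with E[T^ε] < ∞ for some ε > β, then lim_{x→∞} P(YT > x) / P(Y > x) = E[T^β]. -/
open MeasureTheory ProbabilityTheory Filter Real

lemma brei_chain {F : ℝ → ℝ} {X₀ c : ℝ} (hc : 0 ≤ c)
    (hd : ∀ y, X₀ ≤ y → F y ≤ c * F (2 * y)) (hX₀ : 1 ≤ X₀) :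
    ∀ n : ℕ, ∀ s, X₀ ≤ s → F s ≤ c ^ n * F (2 ^ n * s) := by
  intro n
  induction n with
  | zero => intro s hs; simp
  | succ n ih =>
    intro s hs
    have hs0 : (0:ℝ) < s := lt_of_lt_of_le one_pos (hX₀.trans hs)
    have h1 : X₀ ≤ 2 ^ n * s := le_trans hs (le_mul_of_one_le_left hs0.le (one_le_pow₀ one_le_two))
    have h2 := hd _ h1
    calc F s ≤ c ^ n * F (2 ^ n * s) := ih s hs
      _ ≤ c ^ n * (c * F (2 * (2 ^ n * s))) := by
          exact mul_le_mul_of_nonneg_left h2 (pow_nonneg hc n)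
      _ = c ^ (n + 1) * F (2 ^ (n + 1) * s) := by ring_nf

lemma brei_potter {F : ℝ → ℝ} (hF : Antitone F) (hFnn : ∀ x, 0 ≤ F x) {X₀ ε : ℝ}
    (hX₀ : 1 ≤ X₀) (hε : 0 < ε)
    (hd : ∀ y, X₀ ≤ y → F y ≤ 2 ^ ε * F (2 * y)) :
    ∀ s x, X₀ ≤ s → s ≤ x → F s ≤ (2 * (x / s)) ^ ε * F x := by
  intro s x hs hsx
  have hs0 : (0:ℝ) < s := lt_of_lt_of_le one_pos (hX₀.trans hs)
  have h1 : 1 ≤ x / s := (one_le_div hs0).mpr hsx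
  have hex : ∃ n : ℕ, x / s ≤ 2 ^ n := by
    obtain ⟨n, hn⟩ := pow_unbounded_of_one_lt (x / s) (one_lt_two (α := ℝ))
    exact ⟨n, hn.le⟩
  classical
  set n := Nat.find hex with hn
  have hn1 : x / s ≤ 2 ^ n := Nat.find_spec hex
  have hn2 : (2:ℝ) ^ n ≤ 2 * (x / s) := by
    rcases Nat.eq_zero_or_pos n with h0 | hpos
    · rw [h0]; simpa using by linarith
    · have hk := Nat.find_min hex (m := n - 1) (by omega)
      push_neg at hk
      have : (2:ℝ) ^ n = 2 * 2 ^ (n - 1) := by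
        rw [← pow_succ']
        congr 1
        omega
      rw [this]
      nlinarith [hk]
  have hchain := brei_chain (Real.rpow_nonneg (by norm_num : (0:ℝ) ≤ 2) ε) hd hX₀ n s hs
  have hxle : x ≤ 2 ^ n * s := by
    calc x = (x / s) * s := by field_simp
      _ ≤ 2 ^ n * s := mul_le_mul_of_nonneg_right hn1 hs0.le
  have hmono : F (2 ^ n * s) ≤ F x := hF hxle
  have hcpow : ((2:ℝ) ^ ε) ^ n = ((2:ℝ) ^ n) ^ ε := by
    rw [← Real.rpow_natCast ((2:ℝ) ^ ε) n, ← Real.rpow_natCast (2:ℝ) n,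
      ← Real.rpow_mul (by norm_num), ← Real.rpow_mul (by norm_num), mul_comm]
  have hple : ((2:ℝ) ^ n) ^ ε ≤ (2 * (x / s)) ^ ε :=
    Real.rpow_le_rpow (by positivity) hn2 hε.le
  calc F s ≤ ((2:ℝ) ^ ε) ^ n * F (2 ^ n * s) := hchain
    _ ≤ ((2:ℝ) ^ ε) ^ n * F x := mul_le_mul_of_nonneg_left hmono (by positivity)
    _ = ((2:ℝ) ^ n) ^ ε * F x := by rw [hcpow]
    _ ≤ (2 * (x / s)) ^ ε * F x := mul_le_mul_of_nonneg_right hple (hFnn x)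

/-- `L` is slowly varying at infinity: `L(ax)/L(x) → 1` as `x → ∞` for every `a > 0`. -/
def SlowlyVarying (L : ℝ → ℝ) : Prop :=
  ∀ a > 0, Filter.Tendsto (fun x => L (a * x) / L x) Filter.atTop (nhds 1)

set_option maxHeartbeats 1000000 in
theorem stmt0
    {Ω : Type*} [MeasurableSpace Ω] (μ : Measure Ω) [IsProbabilityMeasure μ]
    (Y T : Ω → ℝ) (hYm : Measurable Y) (hTm : Measurable T)
    (hYnn : ∀ᵐ ω ∂μ, 0 ≤ Y ω) (hTpos : ∀ᵐ ω ∂μ, 0 < T ω)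
    (hindep : IndepFun Y T μ)
    (β : ℝ) (hβ : 0 < β)
    (L : ℝ → ℝ) (hL : SlowlyVarying L)
    (htail : ∀ᶠ x in atTop, (μ {ω | Y ω > x}).toReal = x ^ (-β) * L x)
    (hmom : ∃ ε > β, Integrable (fun ω => T ω ^ ε) μ) :
    Tendsto (fun x => (μ {ω | Y ω * T ω > x}).toReal / (μ {ω | Y ω > x}).toReal)
      atTop (nhds (∫ ω, T ω ^ β ∂μ)) := by
  obtain ⟨ε, hεβ, hTε⟩ := hmom
  have hε : 0 < ε := hβ.trans hεβ
  set ν : Measure ℝ := μ.map T with hνdef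
  have hνprob : IsProbabilityMeasure ν := Measure.isProbabilityMeasure_map hTm.aemeasurable
  set F : ℝ → ℝ := fun s => (μ {ω | Y ω > s}).toReal with hFdef
  -- basic facts about F
  have hFanti : Antitone F := by
    intro a b hab
    exact ENNReal.toReal_mono (measure_ne_top μ _)
      (measure_mono (fun ω hω => lt_of_le_of_lt hab hω))
  have hFnn : ∀ s, 0 ≤ F s := fun s => ENNReal.toReal_nonneg
  have hFle1 : ∀ s, F s ≤ 1 := by
    intro s
    have := prob_le_one (μ := μ) (s := {ω | Y ω > s})
    simpa using ENNReal.toReal_mono ENNReal.one_ne_top this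
  -- ν-a.e. positivity
  have hTposν : ∀ᵐ t ∂ν, 0 < t := by
    rw [hνdef, ae_map_iff hTm.aemeasurable measurableSet_Ioi]
    exact hTpos
  -- eventually L is positive
  have hLne : ∀ᶠ x in atTop, L x ≠ 0 := by
    have h1 := hL 1 one_pos
    simp only [one_mul] at h1
    filter_upwards [h1.eventually (eventually_gt_nhds (by norm_num : (1:ℝ)/2 < 1))] with x hx
    intro h0
    rw [h0] at hx
    norm_num at hx
  have hLpos : ∀ᶠ x in atTop, 0 < L x := by
    filter_upwards [hLne, htail, eventually_gt_atTop 0] with x hx htx hx0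
    have hxβ : 0 < x ^ (-β) := Real.rpow_pos_of_pos hx0 _
    have hmul : 0 ≤ x ^ (-β) * L x := htx ▸ hFnn x
    have hnn : 0 ≤ L x := by nlinarith
    exact lt_of_le_of_ne hnn (Ne.symm hx)
  have hFposEv : ∀ᶠ x in atTop, 0 < F x := by
    filter_upwards [htail, hLpos, eventually_gt_atTop 0] with x htx hLx hx0
    rw [hFdef]
    simp only
    rw [htx]
    exact mul_pos (Real.rpow_pos_of_pos hx0 _) hLx
  -- ratio limit
  have hratio : ∀ a : ℝ, 0 < a →
      Tendsto (fun x => F (a * x) / F x) atTop (nhds (a ^ (-β))) := by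
    intro a ha
    have hmul : Tendsto (fun x : ℝ => a * x) atTop atTop :=
      Tendsto.const_mul_atTop ha tendsto_id
    have h1 : Tendsto (fun x => a ^ (-β) * (L (a * x) / L x)) atTop
        (nhds (a ^ (-β) * 1)) := (hL a ha).const_mul _
    rw [mul_one] at h1
    refine h1.congr' ?_
    filter_upwards [htail, hmul.eventually htail, hLne, eventually_gt_atTop 0]
      with x ht1 ht2 hLx hx0
    have h4 : x ^ (-β) ≠ 0 := (Real.rpow_pos_of_pos hx0 _).ne'
    rw [hFdef]
    simp only
    rw [ht1, ht2, Real.mul_rpow ha.le hx0.le]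
    field_simp
  -- doubling
  have hdoub : ∀ᶠ y in atTop, F y ≤ 2 ^ ε * F (2 * y) := by
    have h2 := hratio 2 two_pos
    have hlt : (2:ℝ) ^ (-ε) < 2 ^ (-β) :=
      (Real.rpow_lt_rpow_left_iff one_lt_two).mpr (by linarith)
    filter_upwards [h2.eventually (eventually_gt_nhds hlt), hFposEv] with y h hy
    have key : (2:ℝ) ^ ε * (2:ℝ) ^ (-ε) = 1 := by
      rw [← Real.rpow_add two_pos]; simp
    have h2e : (0:ℝ) < 2 ^ ε := Real.rpow_pos_of_pos two_pos ε
    have hlt2 : (2:ℝ) ^ (-ε) * F y < F (2 * y) := (lt_div_iff₀ hy).mp h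
    calc F y = 2 ^ ε * (2 ^ (-ε) * F y) := by rw [← mul_assoc, key, one_mul]
      _ ≤ 2 ^ ε * F (2 * y) := mul_le_mul_of_nonneg_left hlt2.le h2e.le
  obtain ⟨X₁, hX₁⟩ := eventually_atTop.mp (hdoub.and hFposEv)
  set X₀ : ℝ := max X₁ 1 with hX₀def
  have hX₀one : (1:ℝ) ≤ X₀ := le_max_right _ _
  have hX₀pos : (0:ℝ) < X₀ := lt_of_lt_of_le one_pos hX₀one
  have hdoub' : ∀ y, X₀ ≤ y → F y ≤ 2 ^ ε * F (2 * y) :=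
    fun y hy => (hX₁ y ((le_max_left _ _).trans hy)).1
  have hFpos' : ∀ y, X₀ ≤ y → 0 < F y :=
    fun y hy => (hX₁ y ((le_max_left _ _).trans hy)).2
  have hpotter := brei_potter hFanti hFnn hX₀one hε hdoub'
  -- the key identity
  have hkey : ∀ x : ℝ, (μ {ω | Y ω * T ω > x}).toReal = ∫ t, F (x / t) ∂ν := by
    intro x
    have hprod := (indepFun_iff_map_prod_eq_prod_map_map hYm.aemeasurable
      hTm.aemeasurable).mp hindep
    have hSmeas : MeasurableSet {p : ℝ × ℝ | p.1 * p.2 > x} :=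
      measurableSet_lt measurable_const (measurable_fst.mul measurable_snd)
    have e1 : μ {ω | Y ω * T ω > x} = (μ.map Y).prod ν {p : ℝ × ℝ | p.1 * p.2 > x} := by
      rw [hνdef, ← hprod, Measure.map_apply (hYm.prodMk hTm) hSmeas]
      rfl
    have e2 := Measure.prod_apply_symm (μ := μ.map Y) (ν := ν) hSmeas
    have e3 : ∫⁻ t, (μ.map Y) ((fun y => (y, t)) ⁻¹' {p : ℝ × ℝ | p.1 * p.2 > x}) ∂ν
        = ∫⁻ t, μ {ω | Y ω > x / t} ∂ν := by
      refine lintegral_congr_ae ?_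
      filter_upwards [hTposν] with t ht
      have hset : ((fun y => (y, t)) ⁻¹' {p : ℝ × ℝ | p.1 * p.2 > x}) = Set.Ioi (x / t) := by
        ext y
        simp only [Set.mem_preimage, Set.mem_setOf_eq, Set.mem_Ioi, gt_iff_lt]
        rw [div_lt_iff₀ ht]
      rw [hset, Measure.map_apply hYm measurableSet_Ioi]
      rfl
    have hφ : Antitone (fun s : ℝ => μ {ω | Y ω > s}) := by
      intro a b hab
      exact measure_mono (fun ω hω => lt_of_le_of_lt hab hω)
    have hmeas_t : AEMeasurable (fun t : ℝ => μ {ω | Y ω > x / t}) ν := by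
      exact (hφ.measurable.comp (measurable_const.div measurable_id)).aemeasurable
    have e4 : ∫ t, F (x / t) ∂ν = (∫⁻ t, μ {ω | Y ω > x / t} ∂ν).toReal := by
      rw [← integral_toReal hmeas_t (ae_of_all _ (fun t => measure_lt_top μ _))]
    rw [e4, e1, e2, e3]
  -- constants
  set c₀ : ℝ := F X₀ with hc₀def
  have hc₀ : 0 < c₀ := hFpos' X₀ le_rfl
  set Cc : ℝ := 2 ^ ε * (1 + c₀⁻¹) with hCcdef
  have h2e : (0:ℝ) < 2 ^ ε := Real.rpow_pos_of_pos two_pos ε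
  have h2e1 : (1:ℝ) ≤ 2 ^ ε := Real.one_le_rpow one_le_two hε.le
  have hCc1 : 1 ≤ Cc := by
    have := inv_pos.mpr hc₀
    nlinarith
  have hrpow_meas : Measurable (fun t : ℝ => t ^ ε) :=
    (Real.continuous_rpow_const hε.le).measurable
  -- integrable bound
  have hbound_int : Integrable (fun t => Cc * max 1 (t ^ ε)) ν := by
    have hgm : Measurable (fun t : ℝ => max 1 (t ^ ε)) := measurable_const.max hrpow_meas
    have : Integrable (fun t : ℝ => max 1 (t ^ ε)) ν := by
      rw [hνdef, integrable_map_measure hgm.aestronglyMeasurable hTm.aemeasurable]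
      refine Integrable.mono' ((integrable_const 1).add hTε.abs)
        ((hgm.comp hTm).aestronglyMeasurable) ?_
      filter_upwards with ω
      have h1 : max 1 (T ω ^ ε) ≤ 1 + |T ω ^ ε| :=
        max_le (by linarith [abs_nonneg (T ω ^ ε)]) ((le_abs_self _).trans (by linarith [abs_nonneg (T ω ^ ε)]))
      have h2 : (0:ℝ) < max 1 (T ω ^ ε) := lt_of_lt_of_le one_pos (le_max_left _ _)
      simp only [Function.comp_apply, Real.norm_eq_abs]
      rw [abs_of_pos h2]
      exact h1
    exact this.const_mul Cc
  -- domination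
  have hdom : ∀ x, X₀ ≤ x → ∀ t : ℝ, 0 < t →
      ‖F (x / t) / F x‖ ≤ Cc * max 1 (t ^ ε) := by
    intro x hx t ht
    have hx0 : (0:ℝ) < x := lt_of_lt_of_le hX₀pos hx
    have hFx : 0 < F x := hFpos' x hx
    have hmax1 : (1:ℝ) ≤ max 1 (t ^ ε) := le_max_left _ _
    have hmaxt : t ^ ε ≤ max 1 (t ^ ε) := le_max_right _ _
    have hnorm : ‖F (x / t) / F x‖ = F (x / t) / F x := by
      rw [Real.norm_eq_abs, abs_of_nonneg (div_nonneg (hFnn _) hFx.le)]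
    rw [hnorm]
    rcases le_or_gt t 1 with ht1 | ht1
    · -- small t : ratio ≤ 1
      have hxt : x ≤ x / t := by
        rw [le_div_iff₀ ht]
        nlinarith
      have : F (x / t) / F x ≤ 1 := (div_le_one hFx).mpr (hFanti hxt)
      nlinarith
    · have htε : (0:ℝ) < t ^ ε := Real.rpow_pos_of_pos ht ε
      rcases le_or_gt X₀ (x / t) with hcase | hcase
      · -- Potter region
        have hs_le_x : x / t ≤ x := by
          rw [div_le_iff₀ ht]
          nlinarith
        have hp := hpotter (x / t) x hcase hs_le_x
        have hxx : x / (x / t) = t := by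
          field_simp
        rw [hxx] at hp
        have h2t : (2 * t) ^ ε = 2 ^ ε * t ^ ε := Real.mul_rpow (by norm_num) ht.le
        rw [h2t] at hp
        have : F (x / t) / F x ≤ 2 ^ ε * t ^ ε := by
          rw [div_le_iff₀ hFx]
          exact hp
        have hc0inv : 0 < c₀⁻¹ := inv_pos.mpr hc₀
        calc F (x / t) / F x ≤ 2 ^ ε * t ^ ε := this
          _ ≤ 2 ^ ε * max 1 (t ^ ε) := mul_le_mul_of_nonneg_left hmaxt h2e.le
          _ ≤ Cc * max 1 (t ^ ε) := by
              rw [hCcdef]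
              have hnonneg : (0:ℝ) ≤ 2 ^ ε * c₀⁻¹ * max 1 (t ^ ε) := by positivity
              nlinarith [hnonneg]
      · -- large t region
        have hp := hpotter X₀ x le_rfl hx
        set A : ℝ := (2 * (x / X₀)) ^ ε with hAdef
        have hApos : (0:ℝ) < A := Real.rpow_pos_of_pos (by positivity) ε
        have hr1 : F (x / t) / F x ≤ 1 / F x :=
          (div_le_div_iff_of_pos_right hFx).mpr (hFle1 _)
        have hr2 : 1 / F x ≤ A / c₀ := by
          rw [div_le_div_iff₀ hFx hc₀]
          nlinarith
        have hxX₀t : x / X₀ < t := by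
          rw [div_lt_iff₀ hX₀pos]
          calc x = (x / t) * t := by field_simp
            _ < X₀ * t := by nlinarith
            _ = t * X₀ := by ring
        have hA2t : A ≤ (2 * t) ^ ε := by
          rw [hAdef]
          exact Real.rpow_le_rpow (by positivity) (by linarith) hε.le
        have h2t : (2 * t) ^ ε = 2 ^ ε * t ^ ε := Real.mul_rpow (by norm_num) ht.le
        have hc0inv : 0 < c₀⁻¹ := inv_pos.mpr hc₀
        calc F (x / t) / F x ≤ A / c₀ := hr1.trans hr2
          _ ≤ (2 ^ ε * t ^ ε) / c₀ := by
              rw [← h2t]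
              exact (div_le_div_iff_of_pos_right hc₀).mpr hA2t
          _ = 2 ^ ε * c₀⁻¹ * t ^ ε := by field_simp
          _ ≤ 2 ^ ε * c₀⁻¹ * max 1 (t ^ ε) :=
              mul_le_mul_of_nonneg_left hmaxt (by positivity)
          _ ≤ Cc * max 1 (t ^ ε) := by
              rw [hCcdef]
              nlinarith
  -- pointwise limit
  have hlim : ∀ᵐ t ∂ν, Tendsto (fun x => F (x / t) / F x) atTop (nhds (t ^ β)) := by
    filter_upwards [hTposν] with t ht
    have h1 := hratio t⁻¹ (inv_pos.mpr ht)
    have heq : (fun x => F (t⁻¹ * x) / F x) = fun x => F (x / t) / F x := by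
      funext x; rw [show x / t = t⁻¹ * x from div_eq_inv_mul x t]
    rw [heq] at h1
    have hval : (t⁻¹ : ℝ) ^ (-β) = t ^ β := by
      rw [Real.inv_rpow ht.le, Real.rpow_neg ht.le, inv_inv]
    rwa [hval] at h1
  -- DCT
  have hDCT : Tendsto (fun x => ∫ t, F (x / t) / F x ∂ν) atTop (nhds (∫ t, t ^ β ∂ν)) := by
    apply tendsto_integral_filter_of_dominated_convergence
      (bound := fun t => Cc * max 1 (t ^ ε))
    · filter_upwards with x
      exact (((hFanti.measurable).comp (measurable_const.div measurable_id)).div_const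
        (F x)).aestronglyMeasurable
    · filter_upwards [eventually_ge_atTop X₀] with x hx
      filter_upwards [hTposν] with t ht
      exact hdom x hx t ht
    · exact hbound_int
    · exact hlim
  -- final assembly
  have hfinal : ∫ t, t ^ β ∂ν = ∫ ω, T ω ^ β ∂μ := by
    rw [hνdef, integral_map hTm.aemeasurable
      ((Real.continuous_rpow_const hβ.le).measurable).aestronglyMeasurable]
  rw [← hfinal]
  refine hDCT.congr (fun x => ?_)
  rw [integral_div, ← hkey x]
end

section
/- If Y has survival function P(Y > x) = x^{-β} L(x) with L slowly varying and β > 0, and T > 0 is independent of Y with E[T^ε] < ∞ for some ε > β, then the product X = YT also has a Pareto-type (regularly varying) upper tail with the same index β; i.e., P(X > x) = x^{-β} ℓ(x) for some slowly varying ℓ, namely ℓ(x) = L(x) E[T^β] (1 + o(1)). -/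
open MeasureTheory ProbabilityTheory Filter Real

/-!
Breiman's lemma. Writing `U` for the tail of `Y`, independence gives
`P(YT > x) = E[U(x/T)]`, so `P(YT > x) / U(x) = E[U(x/T) / U(x)]`. Regular variation of `U`
gives `U(x/t) / U(x) → t^β` for each `t > 0`, and iterating the doubling bound
`U(x) ≤ 2^ε U(2x)` (valid for large `x` since `β < ε`) gives the Potter-type domination
`U(x/t) ≤ (1 + C t^ε) U(x)`, integrable in `t = T`. Dominated convergence yields
`P(YT > x) ~ E[T^β] U(x)`, and `ℓ(x) = x^β P(YT > x)` is `L` times a factor tending to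
`E[T^β] > 0`, hence slowly varying.
-/

open Topology

def RegularlyVarying (U : ℝ → ℝ) (ρ : ℝ) : Prop :=
  ∀ a > 0, Tendsto (fun x => U (a * x) / U x) atTop (𝓝 (a ^ ρ))

theorem eventuallyEq_comp_mul_div {f g : ℝ → ℝ} (h : f =ᶠ[atTop] g) {a : ℝ} (ha : 0 < a) :
    (fun x => f (a * x) / f x) =ᶠ[atTop] fun x => g (a * x) / g x := by
  filter_upwards [h, (tendsto_id.const_mul_atTop ha).eventually h]
    with x hx (hax : f (a * x) = g (a * x))
  rw [hx, hax]

namespace SlowlyVarying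

variable {L : ℝ → ℝ}

theorem eventually_ne_zero (hL : SlowlyVarying L) : ∀ᶠ x in atTop, L x ≠ 0 := by
  filter_upwards [(hL 1 one_pos).eventually_ne one_ne_zero] with x hx h0
  simp [h0] at hx

theorem congr' (hL : SlowlyVarying L) {L' : ℝ → ℝ} (h : L =ᶠ[atTop] L') : SlowlyVarying L' :=
  fun a ha => (hL a ha).congr' (eventuallyEq_comp_mul_div h ha)

theorem mul_of_tendsto (hL : SlowlyVarying L) {r : ℝ → ℝ} {c : ℝ} (hr : Tendsto r atTop (𝓝 c))
    (hc : c ≠ 0) : SlowlyVarying fun x => L x * r x := by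
  intro a ha
  have hra : Tendsto (fun x => r (a * x) / r x) atTop (𝓝 1) := by
    rw [← div_self hc]
    exact (hr.comp (tendsto_id.const_mul_atTop ha)).div hr hc
  simpa [mul_div_mul_comm] using (hL a ha).mul hra

theorem regularlyVarying_rpow_mul (hL : SlowlyVarying L) (ρ : ℝ) :
    RegularlyVarying (fun x => x ^ ρ * L x) ρ := by
  intro a ha
  refine ((hL a ha).const_mul (a ^ ρ)).congr' ?_ |>.trans (by rw [mul_one])
  filter_upwards [hL.eventually_ne_zero, eventually_gt_atTop 0] with x hLx hx
  rw [mul_rpow ha.le hx.le]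
  field_simp

theorem exists_eq_rpow_neg_mul_of_tendsto_div (hL : SlowlyVarying L) {U V : ℝ → ℝ} {β c : ℝ}
    (hUL : ∀ᶠ x in atTop, U x = x ^ (-β) * L x) (hVU : Tendsto (fun x => V x / U x) atTop (𝓝 c))
    (hc : c ≠ 0) :
    ∃ ℓ : ℝ → ℝ, SlowlyVarying ℓ ∧ (∀ᶠ x in atTop, V x = x ^ (-β) * ℓ x) ∧
      Tendsto (fun x => ℓ x / (L x * c)) atTop (𝓝 1) := by
  have hℓ : (fun x => x ^ β * V x) =ᶠ[atTop] fun x => L x * (V x / U x) := by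
    filter_upwards [hUL, hL.eventually_ne_zero, eventually_gt_atTop 0] with x hx hLx hx0
    rw [hx, rpow_neg hx0.le]
    field_simp
  refine ⟨fun x => x ^ β * V x, (hL.mul_of_tendsto hVU hc).congr' hℓ.symm, ?_, ?_⟩
  · filter_upwards [eventually_gt_atTop 0] with x hx0
    rw [← mul_assoc, ← rpow_add hx0, neg_add_cancel, rpow_zero, one_mul]
  · have hVUc : Tendsto (fun x => V x / U x / c) atTop (𝓝 1) := by
      simpa [hc] using hVU.div_const c
    refine hVUc.congr' ?_
    filter_upwards [hℓ, hL.eventually_ne_zero] with x hx hLx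
    rw [hx, mul_div_mul_left _ _ hLx]

end SlowlyVarying

namespace RegularlyVarying

variable {U : ℝ → ℝ} {ρ : ℝ}

theorem congr' (hU : RegularlyVarying U ρ) {U' : ℝ → ℝ} (h : U =ᶠ[atTop] U') :
    RegularlyVarying U' ρ :=
  fun a ha => (hU a ha).congr' (eventuallyEq_comp_mul_div h ha)

theorem eventually_le_two_rpow_mul (hU : RegularlyVarying U ρ) (hpos : ∀ᶠ x in atTop, 0 < U x)
    {γ : ℝ} (hργ : -γ < ρ) : ∀ᶠ x in atTop, U x ≤ 2 ^ γ * U (2 * x) := by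
  have hlt : (2 : ℝ) ^ (-γ) < 2 ^ ρ := rpow_lt_rpow_of_exponent_lt one_lt_two hργ
  filter_upwards [(hU 2 two_pos).eventually (eventually_gt_nhds hlt), hpos] with x hx hUx
  rw [lt_div_iff₀ hUx, rpow_neg zero_le_two] at hx
  have h2γ : (0 : ℝ) < 2 ^ γ := by positivity
  calc U x = 2 ^ γ * ((2 ^ γ)⁻¹ * U x) := by field_simp
    _ ≤ 2 ^ γ * U (2 * x) := by gcongr

end RegularlyVarying

namespace Antitone

variable {U : ℝ → ℝ} {γ x₀ : ℝ}

theorem le_rpow_mul_of_doubling (hU : Antitone U) (hUnn : ∀ x, 0 ≤ U x) (hγ : 0 ≤ γ)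
    (hx₀ : 0 < x₀) (hdbl : ∀ x ≥ x₀, U x ≤ 2 ^ γ * U (2 * x)) {x y : ℝ} (hy : x₀ ≤ y)
    (hyx : y ≤ x) : U y ≤ 2 ^ γ * (x / y) ^ γ * U x := by
  have hy0 : 0 < y := hx₀.trans_le hy
  have hiter : ∀ n : ℕ, U y ≤ (2 ^ γ) ^ n * U (2 ^ n * y) := by
    intro n
    induction n with
    | zero => simp
    | succ n ih =>
      have hny : x₀ ≤ 2 ^ n * y := hy.trans (le_mul_of_one_le_left hy0.le (one_le_pow₀ one_le_two))
      calc U y ≤ (2 ^ γ) ^ n * U (2 ^ n * y) := ih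
        _ ≤ (2 ^ γ) ^ n * (2 ^ γ * U (2 * (2 ^ n * y))) := by gcongr; exact hdbl _ hny
        _ = (2 ^ γ) ^ (n + 1) * U (2 ^ (n + 1) * y) := by ring_nf
  obtain ⟨n, hn, hn1⟩ := exists_nat_pow_near ((one_le_div hy0).2 hyx) one_lt_two
  calc U y ≤ (2 ^ γ) ^ (n + 1) * U (2 ^ (n + 1) * y) := hiter (n + 1)
    _ ≤ (2 ^ γ) ^ (n + 1) * U x := by gcongr; exact hU ((div_le_iff₀ hy0).1 hn1.le)
    _ = 2 ^ γ * ((2 : ℝ) ^ n) ^ γ * U x := by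
      rw [← rpow_natCast_mul zero_le_two, mul_comm (n : ℝ), rpow_mul_natCast zero_le_two, pow_succ,
        mul_comm ((2 : ℝ) ^ γ)]
    _ ≤ 2 ^ γ * (x / y) ^ γ * U x := by gcongr; exact hUnn x

theorem le_one_add_mul_rpow_mul (hU : Antitone U) (hUnn : ∀ x, 0 ≤ U x) (hU1 : ∀ x, U x ≤ 1)
    (hγ : 0 ≤ γ) (hx₀ : 0 < x₀) (hUx₀ : 0 < U x₀) (hdbl : ∀ x ≥ x₀, U x ≤ 2 ^ γ * U (2 * x))
    {x t : ℝ} (hx : x₀ ≤ x) (ht : 0 < t) : U (x / t) ≤ (1 + 2 ^ γ / U x₀ * t ^ γ) * U x := by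
  have hx0 : 0 < x := hx₀.trans_le hx
  have hC : 0 ≤ 2 ^ γ / U x₀ * t ^ γ := by positivity
  rcases le_or_gt t 1 with ht1 | ht1
  · calc U (x / t) ≤ U x := hU (le_div_self hx0.le ht ht1)
      _ ≤ (1 + 2 ^ γ / U x₀ * t ^ γ) * U x := le_mul_of_one_le_left (hUnn x) (by linarith)
  suffices U (x / t) ≤ 2 ^ γ / U x₀ * t ^ γ * U x by nlinarith [hUnn x]
  rcases le_or_gt x₀ (x / t) with hxt | hxt
  · calc U (x / t) ≤ 2 ^ γ * (x / (x / t)) ^ γ * U x :=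
          hU.le_rpow_mul_of_doubling hUnn hγ hx₀ hdbl hxt (div_le_self hx0.le ht1.le)
      _ = 2 ^ γ * t ^ γ * U x := by rw [div_div_cancel₀ hx0.ne']
      _ ≤ 2 ^ γ / U x₀ * t ^ γ * U x := by
          gcongr
          · exact hUnn x
          · exact le_div_self (by positivity) hUx₀ (hU1 x₀)
  · -- below `x₀` there is no doubling bound; `U ≤ 1` is used instead, at the cost of `1 / U x₀`
    have hxx₀ : x / x₀ ≤ t := by
      rw [div_lt_iff₀ ht] at hxt
      rw [div_le_iff₀ hx₀]
      linarith
    calc U (x / t) ≤ 1 := hU1 _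
      _ = U x₀ / U x₀ := (div_self hUx₀.ne').symm
      _ ≤ 2 ^ γ * (x / x₀) ^ γ * U x / U x₀ := by
          gcongr; exact hU.le_rpow_mul_of_doubling hUnn hγ hx₀ hdbl le_rfl hx
      _ ≤ 2 ^ γ * t ^ γ * U x / U x₀ := by gcongr; exact hUnn x
      _ = 2 ^ γ / U x₀ * t ^ γ * U x := by ring

end Antitone

section Integral

variable {Ω : Type*} [MeasurableSpace Ω] {μ : Measure Ω}

theorem integral_pos_of_ae_pos [NeZero μ] {f : Ω → ℝ} (hf : ∀ᵐ ω ∂μ, 0 < f ω)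
    (hfi : Integrable f μ) : 0 < ∫ ω, f ω ∂μ := by
  refine (integral_nonneg_of_ae (hf.mono fun _ h => h.le)).lt_of_ne fun h => ?_
  have hzero := (integral_eq_zero_iff_of_nonneg_ae (hf.mono fun _ h => h.le) hfi).1 h.symm
  obtain ⟨ω, hpos, hω⟩ := (hf.and hzero).exists
  exact hpos.ne' hω

theorem integrable_rpow_of_le [IsFiniteMeasure μ] {T : Ω → ℝ} (hT : Measurable T)
    (hTnn : ∀ᵐ ω ∂μ, 0 ≤ T ω) {β γ : ℝ} (hβ : 0 ≤ β) (hβγ : β ≤ γ)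
    (hTγ : Integrable (fun ω => T ω ^ γ) μ) : Integrable (fun ω => T ω ^ β) μ := by
  refine ((integrable_const 1).add hTγ).mono' (hT.pow_const β).aestronglyMeasurable ?_
  filter_upwards [hTnn] with ω hω
  rw [norm_of_nonneg (rpow_nonneg hω β)]
  show T ω ^ β ≤ 1 + T ω ^ γ
  rcases le_or_gt (T ω) 1 with h1 | h1
  · linarith [rpow_le_one hω h1 hβ, rpow_nonneg hω γ]
  · linarith [rpow_le_rpow_of_exponent_le h1.le hβγ]

variable [IsFiniteMeasure μ] {T : Ω → ℝ}

theorem tendsto_integral_div_of_regularlyVarying (hT : Measurable T)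
    (hTpos : ∀ᵐ ω ∂μ, 0 < T ω) {U : ℝ → ℝ} (hU : Antitone U) (hUnn : ∀ x, 0 ≤ U x)
    (hU1 : ∀ x, U x ≤ 1) {β γ : ℝ} (hβ : 0 ≤ β) (hβγ : β < γ) (hreg : RegularlyVarying U (-β))
    (hpos : ∀ᶠ x in atTop, 0 < U x) (hTγ : Integrable (fun ω => T ω ^ γ) μ) :
    Tendsto (fun x => (∫ ω, U (x / T ω) ∂μ) / U x) atTop (𝓝 (∫ ω, T ω ^ β ∂μ)) := by
  have hγ : 0 ≤ γ := hβ.trans hβγ.le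
  obtain ⟨x₀, hx₀⟩ := ((eventually_gt_atTop 0).and <| hpos.and <|
    hreg.eventually_le_two_rpow_mul hpos (neg_lt_neg hβγ)).exists_forall_of_atTop
  obtain ⟨hx₀pos, hUx₀, -⟩ := hx₀ x₀ le_rfl
  have hdbl : ∀ x ≥ x₀, U x ≤ 2 ^ γ * U (2 * x) := fun x hx => (hx₀ x hx).2.2
  simp_rw [← integral_div]
  refine tendsto_integral_filter_of_dominated_convergence
    (fun ω => 1 + 2 ^ γ / U x₀ * T ω ^ γ) ?_ ?_ ?_ ?_
  · exact Eventually.of_forall fun x =>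
      ((hU.measurable.comp (measurable_const.div hT)).div_const _).aestronglyMeasurable
  · filter_upwards [eventually_ge_atTop x₀] with x hx
    filter_upwards [hTpos] with ω hω
    rw [norm_of_nonneg (div_nonneg (hUnn _) (hUnn _)), div_le_iff₀ (hx₀ x hx).2.1]
    exact hU.le_one_add_mul_rpow_mul hUnn hU1 hγ hx₀pos hUx₀ hdbl hx hω
  · exact (integrable_const 1).add (hTγ.const_mul _)
  · filter_upwards [hTpos] with ω hω
    simpa only [div_eq_inv_mul, inv_rpow hω.le, rpow_neg hω.le, inv_inv]
      using hreg (T ω)⁻¹ (inv_pos.2 hω)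

end Integral

theorem toReal_measure_mul_gt_eq_integral {Ω : Type*} [MeasurableSpace Ω] {μ : Measure Ω}
    [IsFiniteMeasure μ] {Y T : Ω → ℝ} (hY : Measurable Y) (hT : Measurable T)
    (hTpos : ∀ᵐ ω ∂μ, 0 < T ω) (hind : IndepFun Y T μ) (x : ℝ) :
    (μ {ω | Y ω * T ω > x}).toReal = ∫ ω, (μ {ω' | Y ω' > x / T ω}).toReal ∂μ := by
  have hs : MeasurableSet {p : ℝ × ℝ | p.1 * p.2 > x} :=
    measurableSet_lt measurable_const (measurable_fst.mul measurable_snd)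
  have hsec : Measurable fun t => μ.map Y {y | y * t > x} := measurable_measure_prodMk_right hs
  have hprod : μ {ω | Y ω * T ω > x} = ∫⁻ ω, μ.map Y {y | y * T ω > x} ∂μ :=
    calc μ {ω | Y ω * T ω > x} = μ.map (fun ω => (Y ω, T ω)) {p | p.1 * p.2 > x} := by
          rw [Measure.map_apply (hY.prodMk hT) hs]; rfl
      _ = ((μ.map Y).prod (μ.map T)) {p | p.1 * p.2 > x} := by
          rw [(indepFun_iff_map_prod_eq_prod_map_map hY.aemeasurable hT.aemeasurable).1 hind]
      _ = ∫⁻ t, μ.map Y {y | y * t > x} ∂μ.map T := Measure.prod_apply_symm hs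
      _ = ∫⁻ ω, μ.map Y {y | y * T ω > x} ∂μ := lintegral_map hsec hT
  rw [hprod, ← integral_toReal (f := fun ω => μ.map Y {y | y * T ω > x})
    (hsec.comp hT).aemeasurable (ae_of_all _ fun _ => measure_lt_top _ _)]
  refine integral_congr_ae ?_
  filter_upwards [hTpos] with ω hω
  have hset : {y : ℝ | y * T ω > x} = Set.Ioi (x / T ω) := by
    ext y
    exact (div_lt_iff₀ hω).symm
  rw [hset, Measure.map_apply hY measurableSet_Ioi]
  rfl

theorem stmt1_general
    {Ω : Type*} [MeasurableSpace Ω] (μ : Measure Ω) [IsProbabilityMeasure μ]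
    (Y T : Ω → ℝ) (hYm : Measurable Y) (hTm : Measurable T)
    (hTpos : ∀ᵐ ω ∂μ, 0 < T ω)
    (hindep : IndepFun Y T μ)
    (β : ℝ) (hβ : 0 < β)
    (L : ℝ → ℝ) (hL : SlowlyVarying L)
    (htail : ∀ᶠ x in atTop, (μ {ω | Y ω > x}).toReal = x ^ (-β) * L x)
    (hmom : ∃ ε > β, Integrable (fun ω => T ω ^ ε) μ) :
    ∃ ℓ : ℝ → ℝ, SlowlyVarying ℓ ∧
      (∀ᶠ x in atTop, (μ {ω | Y ω * T ω > x}).toReal = x ^ (-β) * ℓ x) ∧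
      Tendsto (fun x => ℓ x / (L x * ∫ ω, T ω ^ β ∂μ)) atTop (nhds 1) := by
  obtain ⟨ε, hεβ, hTε⟩ := hmom
  set U : ℝ → ℝ := fun x => (μ {ω | Y ω > x}).toReal
  set V : ℝ → ℝ := fun x => (μ {ω | Y ω * T ω > x}).toReal
  set c := ∫ ω, T ω ^ β ∂μ
  have hUL : ∀ᶠ x in atTop, U x = x ^ (-β) * L x := htail
  have hU : Antitone U := fun a b hab =>
    ENNReal.toReal_mono (measure_ne_top μ _) (measure_mono fun ω h => hab.trans_lt h)
  have hUpos : ∀ᶠ x in atTop, 0 < U x := by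
    filter_upwards [hUL, hL.eventually_ne_zero, eventually_gt_atTop 0] with x hx hLx hx0
    exact ENNReal.toReal_nonneg.lt_of_ne (hx ▸ mul_ne_zero (rpow_pos_of_pos hx0 _).ne' hLx).symm
  have hVU : Tendsto (fun x => V x / U x) atTop (𝓝 c) := by
    simp only [V, toReal_measure_mul_gt_eq_integral hYm hTm hTpos hindep]
    exact tendsto_integral_div_of_regularlyVarying hTm hTpos hU (fun _ => ENNReal.toReal_nonneg)
      (fun _ => measureReal_le_one) hβ.le hεβ
      ((hL.regularlyVarying_rpow_mul (-β)).congr' (hUL.mono fun _ h => h.symm)) hUpos hTε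
  have hc : 0 < c := integral_pos_of_ae_pos (hTpos.mono fun ω h => rpow_pos_of_pos h β)
    (integrable_rpow_of_le hTm (hTpos.mono fun _ h => h.le) hβ.le hεβ.le hTε)
  exact hL.exists_eq_rpow_neg_mul_of_tendsto_div hUL hVU hc.ne'

theorem stmt1
    {Ω : Type*} [MeasurableSpace Ω] (μ : Measure Ω) [IsProbabilityMeasure μ]
    (Y T : Ω → ℝ) (hYm : Measurable Y) (hTm : Measurable T)
    (hYnn : ∀ᵐ ω ∂μ, 0 ≤ Y ω) (hTpos : ∀ᵐ ω ∂μ, 0 < T ω)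
    (hindep : IndepFun Y T μ)
    (β : ℝ) (hβ : 0 < β)
    (L : ℝ → ℝ) (hL : SlowlyVarying L)
    (htail : ∀ᶠ x in atTop, (μ {ω | Y ω > x}).toReal = x ^ (-β) * L x)
    (hmom : ∃ ε > β, Integrable (fun ω => T ω ^ ε) μ) :
    ∃ ℓ : ℝ → ℝ, SlowlyVarying ℓ ∧
      (∀ᶠ x in atTop, (μ {ω | Y ω * T ω > x}).toReal = x ^ (-β) * ℓ x) ∧
      Tendsto (fun x => ℓ x / (L x * ∫ ω, T ω ^ β ∂μ)) atTop (nhds 1) :=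
  stmt1_general μ Y T hYm hTm hTpos hindep β hβ L hL htail hmom
end

section
/- Let W₁, W₂, W₃ be i.i.d. random variables with common distribution function F_W(x) = (1 - x^{-β})^{1/2} for x ≥ 1 (β > 0), and set Y₁ = W₂ ∨ W₁ and Y₂ = W₃ ∨ W₂. Then Y₁ and Y₂ each have distribution function 1 - x^{-β} on [1,∞), and for all x, y > 0, lim_{t→∞} t · P(Y₁ > U(t/x), Y₂ > U(t/y)) = (1/2)(x ∧ y), where U(s) = s^{1/β} is the (1 - 1/s)-quantile of the Pareto(β) distribution. -/
/-!
Each `Yᵢ` is the maximum of two independent copies of `W`, so its distribution function is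
`F_W² = 1 - x^{-β}`. By inclusion–exclusion and independence,
`P(Y₁ > a, Y₂ > b) = a^{-β} + b^{-β} - 1 + F_W(a) F_W(a ∧ b) F_W(b)`,
since `{Y₁ ≤ a, Y₂ ≤ b} = {W₁ ≤ a, W₂ ≤ a ∧ b, W₃ ≤ b}`.
At `a = U(t/x)`, `b = U(t/y)` this is `(x + y)/t - 1 + g(1/t)` with
`g(s) = √((1 - xs)(1 - (x ∨ y)s)(1 - ys))`, so
`t · P(…) → x + y + g'(0) = x + y - (x + y + x ∨ y)/2 = (x ∧ y)/2`.
-/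

open MeasureTheory ProbabilityTheory Filter Real Topology

namespace ProbabilityTheory

variable {Ω ι : Type*} [MeasurableSpace Ω] {μ : Measure Ω} {W : ι → Ω → ℝ}

lemma iIndepFun.measureReal_forall_le (h : iIndepFun W μ) (S : Finset ι) (c : ι → ℝ) :
    μ.real {ω | ∀ i ∈ S, W i ω ≤ c i} = ∏ i ∈ S, μ.real {ω | W i ω ≤ c i} := by
  have := h.measure_inter_preimage_eq_mul S (sets := fun i => Set.Iic (c i))
    fun i _ => measurableSet_Iic
  have hset : {ω | ∀ i ∈ S, W i ω ≤ c i} = ⋂ i ∈ S, W i ⁻¹' Set.Iic (c i) := by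
    ext ω
    simp
  rw [measureReal_def, hset, this, ENNReal.toReal_prod]
  rfl

lemma iIndepFun.measureReal_max_le (h : iIndepFun W μ) {i j : ι} (hij : i ≠ j) (a : ℝ) :
    μ.real {ω | max (W i ω) (W j ω) ≤ a} =
      μ.real {ω | W i ω ≤ a} * μ.real {ω | W j ω ≤ a} := by
  classical
  rw [← Finset.prod_pair hij (f := fun l => μ.real {ω | W l ω ≤ a}),
    ← h.measureReal_forall_le {i, j} fun _ => a]
  congr 1
  ext ω
  simp

lemma iIndepFun.measureReal_max_le_inter_max_le (h : iIndepFun W μ) {i j k : ι}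
    (hij : i ≠ j) (hik : i ≠ k) (hjk : j ≠ k) (a b : ℝ) :
    μ.real ({ω | max (W j ω) (W i ω) ≤ a} ∩ {ω | max (W k ω) (W j ω) ≤ b}) =
      μ.real {ω | W i ω ≤ a} * μ.real {ω | W j ω ≤ min a b} *
        μ.real {ω | W k ω ≤ b} := by
  classical
  set c : ι → ℝ := fun l => if l = i then a else if l = j then min a b else b
  have hset : {ω | max (W j ω) (W i ω) ≤ a} ∩ {ω | max (W k ω) (W j ω) ≤ b} =
      {ω | ∀ l ∈ ({i, j, k} : Finset ι), W l ω ≤ c l} := by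
    ext ω
    simp only [Set.mem_inter_iff, Set.mem_ofPred_eq, max_le_iff, Finset.mem_insert,
      Finset.mem_singleton, forall_eq_or_imp, forall_eq, c, if_pos, if_neg hij.symm,
      if_neg hik.symm, if_neg hjk.symm, le_min_iff]
    tauto
  rw [hset, h.measureReal_forall_le, Finset.prod_insert (by simp [hij, hik]),
    Finset.prod_pair hjk, ← mul_assoc]
  simp only [c, if_pos, if_neg hij.symm, if_neg hik.symm, if_neg hjk.symm]

end ProbabilityTheory

lemma measureReal_compl_inter_compl {Ω : Type*} [MeasurableSpace Ω] {μ : Measure Ω}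
    [IsProbabilityMeasure μ] {A B : Set Ω} (hA : MeasurableSet A) (hB : MeasurableSet B) :
    μ.real (Aᶜ ∩ Bᶜ) = 1 - μ.real A - μ.real B + μ.real (A ∩ B) := by
  rw [← Set.compl_union, probReal_compl_eq_one_sub (hA.union hB)]
  linarith [measureReal_union_add_inter (μ := μ) (s := A) hB]

lemma tendsto_mul_sub_of_hasDerivAt_zero {g : ℝ → ℝ} {g' : ℝ} (hg : HasDerivAt g g' 0) :
    Tendsto (fun t => t * (g t⁻¹ - g 0)) atTop (𝓝 g') := by
  have := hg.tendsto_slope_zero.comp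
    (tendsto_nhdsWithin_mono_right (fun _ h => ne_of_gt h) tendsto_inv_atTop_nhdsGT_zero)
  simpa [Function.comp_def] using this

lemma hasDerivAt_sqrt_one_sub_mul (a : ℝ) : HasDerivAt (fun s => √(1 - a * s)) (-a / 2) 0 := by
  have := ((hasDerivAt_id (0 : ℝ)).const_mul a |>.const_sub 1).sqrt (by simp)
  simpa using this

lemma hasDerivAt_sqrt_mul_sqrt_mul_sqrt (a b c : ℝ) :
    HasDerivAt (fun s => √(1 - a * s) * √(1 - b * s) * √(1 - c * s))
      (-(a + b + c) / 2) 0 := by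
  have := ((hasDerivAt_sqrt_one_sub_mul a).mul (hasDerivAt_sqrt_one_sub_mul b)).mul
    (hasDerivAt_sqrt_one_sub_mul c)
  exact this.congr_deriv (by simp; ring)

lemma rpow_one_div_rpow_neg {β s : ℝ} (hβ : β ≠ 0) (hs : 0 ≤ s) :
    (s ^ (1 / β)) ^ (-β) = s⁻¹ := by
  rw [← rpow_mul hs, one_div_mul_eq_div, neg_div, div_self hβ, rpow_neg_one]

section MovingMaxima

variable {Ω : Type*} [MeasurableSpace Ω] {μ : Measure Ω}
  {β : ℝ} (hβ : 0 < β) {W : Fin 3 → Ω → ℝ}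
  (hcdf : ∀ i x, μ.real {ω | W i ω ≤ x} =
      if 1 ≤ x then (1 - x ^ (-β)) ^ ((1 : ℝ) / 2) else 0)

include hcdf in
lemma measureReal_le_eq_sqrt (i : Fin 3) {x : ℝ} (hx : 1 ≤ x) :
    μ.real {ω | W i ω ≤ x} = √(1 - x ^ (-β)) := by
  rw [hcdf, if_pos hx, sqrt_eq_rpow]

include hβ hcdf in
lemma measureReal_max_le_eq (hiid : iIndepFun W μ) {i j : Fin 3} (hij : i ≠ j)
    {x : ℝ} (hx : 1 ≤ x) :
    μ.real {ω | max (W i ω) (W j ω) ≤ x} = 1 - x ^ (-β) := by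
  rw [hiid.measureReal_max_le hij, measureReal_le_eq_sqrt hcdf i hx,
    measureReal_le_eq_sqrt hcdf j hx, mul_self_sqrt]
  linarith [rpow_le_one_of_one_le_of_nonpos hx (neg_nonpos.mpr hβ.le)]

include hβ hcdf in
lemma measureReal_max_gt_and_max_gt [IsProbabilityMeasure μ] (hWm : ∀ i, Measurable (W i))
    (hiid : iIndepFun W μ) {a b : ℝ} (ha : 1 ≤ a) (hb : 1 ≤ b) :
    μ.real {ω | max (W 1 ω) (W 0 ω) > a ∧ max (W 2 ω) (W 1 ω) > b} =
      a ^ (-β) + b ^ (-β) - 1 +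
        √(1 - a ^ (-β)) * √(1 - max (a ^ (-β)) (b ^ (-β))) * √(1 - b ^ (-β)) := by
  have hmin : (min a b) ^ (-β) = max (a ^ (-β)) (b ^ (-β)) := by
    rcases le_total a b with h | h
    · rw [min_eq_left h, max_eq_left (rpow_le_rpow_of_nonpos (by linarith) h (by linarith))]
    · rw [min_eq_right h, max_eq_right (rpow_le_rpow_of_nonpos (by linarith) h (by linarith))]
  have hA := measurableSet_le ((hWm 1).max (hWm 0)) (measurable_const (a := a))
  have hB := measurableSet_le ((hWm 2).max (hWm 1)) (measurable_const (a := b))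
  have hset : {ω | max (W 1 ω) (W 0 ω) > a ∧ max (W 2 ω) (W 1 ω) > b} =
      {ω | max (W 1 ω) (W 0 ω) ≤ a}ᶜ ∩ {ω | max (W 2 ω) (W 1 ω) ≤ b}ᶜ := by
    ext ω
    simp only [Set.mem_ofPred_eq, Set.mem_inter_iff, Set.mem_compl_iff, not_le, gt_iff_lt]
  rw [hset, measureReal_compl_inter_compl hA hB,
    hiid.measureReal_max_le_inter_max_le (by decide) (by decide) (by decide),
    measureReal_max_le_eq hβ hcdf hiid (by decide) ha,
    measureReal_max_le_eq hβ hcdf hiid (by decide) hb,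
    measureReal_le_eq_sqrt hcdf 0 ha, measureReal_le_eq_sqrt hcdf 1 (le_min ha hb),
    measureReal_le_eq_sqrt hcdf 2 hb, hmin]
  ring

end MovingMaxima

theorem stmt2
    {Ω : Type*} [MeasurableSpace Ω] (μ : Measure Ω) [IsProbabilityMeasure μ]
    (β : ℝ) (hβ : 0 < β)
    (W : Fin 3 → Ω → ℝ) (hWm : ∀ i, Measurable (W i))
    (hiid : iIndepFun W μ)
    (hcdf : ∀ i x, (μ {ω | W i ω ≤ x}).toReal =
      if 1 ≤ x then (1 - x ^ (-β)) ^ ((1 : ℝ) / 2) else 0) :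
    (∀ x ≥ (1 : ℝ), (μ {ω | max (W 1 ω) (W 0 ω) ≤ x}).toReal = 1 - x ^ (-β)) ∧
    (∀ x > (0 : ℝ), ∀ y > (0 : ℝ),
      Tendsto (fun t : ℝ => t * (μ {ω | max (W 1 ω) (W 0 ω) > (t / x) ^ (1 / β)
          ∧ max (W 2 ω) (W 1 ω) > (t / y) ^ (1 / β)}).toReal)
        atTop (nhds ((1 / 2) * min x y))) := by
  refine ⟨fun x hx => measureReal_max_le_eq hβ hcdf hiid (by decide) hx,
    fun x hx y hy => ?_⟩
  have hlim := (tendsto_const_nhds (x := x + y)).add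
    (tendsto_mul_sub_of_hasDerivAt_zero (hasDerivAt_sqrt_mul_sqrt_mul_sqrt x (max x y) y))
  rw [show x + y + -(x + max x y + y) / 2 = 1 / 2 * min x y by
    linarith [min_add_max x y]] at hlim
  refine hlim.congr' ?_
  filter_upwards [eventually_ge_atTop (max x y), eventually_gt_atTop 0] with t ht ht0
  have hU : ∀ z > 0, z ≤ t →
      1 ≤ (t / z) ^ (1 / β) ∧ ((t / z) ^ (1 / β)) ^ (-β) = z / t :=
    fun z hz hzt => ⟨one_le_rpow ((one_le_div hz).mpr hzt) (by positivity),
      by rw [rpow_one_div_rpow_neg hβ.ne' (by positivity), inv_div]⟩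
  obtain ⟨hxa, hxβ⟩ := hU x hx (le_of_max_le_left ht)
  obtain ⟨hyb, hyβ⟩ := hU y hy (le_of_max_le_right ht)
  rw [← measureReal_def, measureReal_max_gt_and_max_gt hβ hcdf hWm hiid hxa hyb, hxβ, hyβ,
    max_div_div_right ht0.le]
  simp only [mul_zero, sub_zero, sqrt_one]
  field_simp
  ring
end

section
/- Let Y be a Pareto(α)-distributed stationary ARMAX sequence Y_n = c(Y_{n-1} ∨ W_n) with 0 < c < 1. Then for any m ≥ 1 and x, y > 0, the lag-m upper tail copula is lim_{t→∞} t · P(Y_1 > U(t/x), Y_{1+m} > U(t/y)) = x ∧ (y c^{mα}), where U(s) = s^{1/α}. -/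
open MeasureTheory ProbabilityTheory Filter Real Topology

/-!
Iterating the recursion gives `c ^ m * Y n ≤ Y (n + m)`, and, for `0 ≤ b`, `Y (n + m) > b` forces
`c ^ m * Y n > b` or `W (n + j + 1) > b / c` for some `j < m`. With `a = U(t/x)` and `b = U(t/y)`
the joint exceedance event therefore contains `{Y 1 > max a (b / c ^ m)}`, and is covered by it
together with the events `{Y 1 > a, W (1 + j + 1) > b / c}`, `j < m`; note `b / c ^ m = U(t/s)`
with `s = y c^{mα}`.
The Pareto law is invariant under one ARMAX step, so `Y 1` is Pareto(α) and `t` times the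
probability of the first event is exactly `min x s` once `t ≥ x, s`; by independence, `t` times
that of each of the others is `x * P(W (1 + j + 1) > b / c)`, which tends to `0`.
-/

section Tails

variable {Ω : Type*} [MeasurableSpace Ω] {μ : Measure Ω} {X : Ω → ℝ}

lemma measureReal_max_lt [IsFiniteMeasure μ] (a b : ℝ) :
    μ.real {ω | max a b < X ω} = min (μ.real {ω | a < X ω}) (μ.real {ω | b < X ω}) := by
  have h : Antitone fun u => μ.real {ω | u < X ω} :=
    fun _ _ huv => measureReal_mono fun _ hω => huv.trans_lt hω
  exact h.map_max

lemma tendsto_measureReal_lt_atTop [IsFiniteMeasure μ] (hX : Measurable X) :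
    Tendsto (fun u : ℝ => μ.real {ω | u < X ω}) atTop (𝓝 0) := by
  have hempty : ⋂ u : ℝ, {ω | u < X ω} = ∅ :=
    Set.eq_empty_of_forall_notMem fun ω hω => lt_irrefl (X ω) (Set.mem_iInter.mp hω (X ω))
  have h := tendsto_measure_iInter_atTop (μ := μ) (s := fun u : ℝ => {ω | u < X ω})
    (fun _ => (measurableSet_lt measurable_const hX).nullMeasurableSet)
    (fun _ _ huv _ hω => huv.trans_lt hω) ⟨0, measure_ne_top μ _⟩
  rw [hempty, measure_empty] at h
  simpa [Function.comp_def, measureReal_def] using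
    (ENNReal.tendsto_toReal ENNReal.zero_ne_top).comp h

lemma measureReal_lt_eq_one_sub [IsProbabilityMeasure μ] (hX : Measurable X) (u : ℝ) :
    μ.real {ω | u < X ω} = 1 - μ.real {ω | X ω ≤ u} := by
  have h : {ω | u < X ω} = {ω | X ω ≤ u}ᶜ := by ext; simp
  rw [h, probReal_compl_eq_one_sub (measurableSet_le hX measurable_const)]

lemma mul_measureReal_rpow_lt {α s t : ℝ} (hα : 0 < α)
    (hX : ∀ z, 1 ≤ z → μ.real {ω | z < X ω} = z ^ (-α)) (hs : 0 < s) (hst : s ≤ t) :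
    t * μ.real {ω | (t / s) ^ (1 / α) < X ω} = s := by
  have ht : 0 < t := hs.trans_le hst
  have h1 : 1 ≤ t / s := (one_le_div hs).mpr hst
  rw [hX _ (one_le_rpow h1 (by positivity)), ← rpow_mul (by positivity),
    show 1 / α * -α = -1 by field_simp, rpow_neg_one, inv_div]
  field_simp

end Tails

lemma rpow_one_div_div_pow {α c s y : ℝ} (hα : 0 < α) (hc : 0 < c) (hs : 0 ≤ s) (hy : 0 < y)
    (m : ℕ) :
    (s / y) ^ (1 / α) / c ^ m = (s / (y * c ^ ((m : ℝ) * α))) ^ (1 / α) := by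
  rw [← div_div, div_rpow (div_nonneg hs hy.le) (by positivity : 0 ≤ c ^ ((m : ℝ) * α)),
    ← rpow_mul hc.le, show (m : ℝ) * α * (1 / α) = m by field_simp, rpow_natCast]

section Armax

variable {Ω : Type*} {c : ℝ} {Y W : ℕ → Ω → ℝ}

lemma pow_mul_le_armax (hc : 0 ≤ c) (hrec : ∀ n ω, Y (n + 1) ω = c * max (Y n ω) (W (n + 1) ω))
    (n m : ℕ) (ω : Ω) : c ^ m * Y n ω ≤ Y (n + m) ω := by
  induction m with
  | zero => simp
  | succ m ih =>
    rw [← add_assoc, hrec, pow_succ', mul_assoc]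
    exact mul_le_mul_of_nonneg_left (ih.trans (le_max_left _ _)) hc

lemma armax_exceed_subset (hc0 : 0 < c) (hc1 : c ≤ 1)
    (hrec : ∀ n ω, Y (n + 1) ω = c * max (Y n ω) (W (n + 1) ω)) (n m : ℕ) {b : ℝ} (hb : 0 ≤ b) :
    {ω | b < Y (n + m) ω} ⊆
      {ω | b < c ^ m * Y n ω} ∪ ⋃ j ∈ Finset.range m, {ω | b / c < W (n + j + 1) ω} := by
  induction m generalizing b with
  | zero => simp
  | succ m ih =>
    intro ω hω
    have hbc : b ≤ b / c := le_div_self hb hc0 hc1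
    have hmax : b / c < max (Y (n + m) ω) (W (n + m + 1) ω) := by
      rw [div_lt_iff₀' hc0, ← hrec]; exact hω
    simp only [Set.mem_union, Set.mem_ofPred_eq, Set.mem_iUnion, Finset.mem_range, exists_prop]
    rcases lt_max_iff.mp hmax with h | h
    · rcases ih (div_nonneg hb hc0.le) h with h' | h'
      · left
        rw [Set.mem_ofPred_eq, div_lt_iff₀' hc0, ← mul_assoc, ← pow_succ'] at h'
        exact h'
      · right
        simp only [Set.mem_iUnion, Set.mem_ofPred_eq, Finset.mem_range, exists_prop] at h'
        obtain ⟨j, hj, hw⟩ := h'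
        exact ⟨j, by omega, (le_div_self (div_nonneg hb hc0.le) hc0 hc1).trans_lt hw⟩
    · exact Or.inr ⟨m, by omega, h⟩

lemma subset_armax_joint_exceed (hc : 0 < c)
    (hrec : ∀ n ω, Y (n + 1) ω = c * max (Y n ω) (W (n + 1) ω)) (n m : ℕ) (a b : ℝ) :
    {ω | max a (b / c ^ m) < Y n ω} ⊆ {ω | a < Y n ω ∧ b < Y (n + m) ω} := by
  intro ω hω
  rw [Set.mem_ofPred_eq, max_lt_iff, div_lt_iff₀' (by positivity)] at hω
  exact ⟨hω.1, hω.2.trans_le (pow_mul_le_armax hc.le hrec n m ω)⟩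

lemma armax_joint_exceed_subset (hc0 : 0 < c) (hc1 : c ≤ 1)
    (hrec : ∀ n ω, Y (n + 1) ω = c * max (Y n ω) (W (n + 1) ω)) (n m : ℕ) (a : ℝ) {b : ℝ}
    (hb : 0 ≤ b) :
    {ω | a < Y n ω ∧ b < Y (n + m) ω} ⊆ {ω | max a (b / c ^ m) < Y n ω} ∪
      ⋃ j ∈ Finset.range m, {ω | a < Y n ω} ∩ {ω | b / c < W (n + j + 1) ω} := by
  rintro ω ⟨ha, hb'⟩
  rcases armax_exceed_subset hc0 hc1 hrec n m hb hb' with h | h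
  · left
    rw [Set.mem_ofPred_eq, max_lt_iff, div_lt_iff₀' (by positivity)]
    exact ⟨ha, h⟩
  · right
    simp only [Set.mem_iUnion, Set.mem_ofPred_eq, Set.mem_inter_iff, exists_prop] at h ⊢
    obtain ⟨j, hj, hw⟩ := h
    exact ⟨j, hj, ha, hw⟩

end Armax

section Pareto

variable {Ω : Type*} [MeasurableSpace Ω] {μ : Measure Ω} {α : ℝ} {X : Ω → ℝ}

lemma mul_measureReal_max_rpow_lt [IsFiniteMeasure μ] (hα : 0 < α)
    (hX : ∀ z, 1 ≤ z → μ.real {ω | z < X ω} = z ^ (-α)) {r s t : ℝ} (hr : 0 < r) (hs : 0 < s)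
    (hrt : r ≤ t) (hst : s ≤ t) :
    t * μ.real {ω | max ((t / r) ^ (1 / α)) ((t / s) ^ (1 / α)) < X ω} = min r s := by
  rw [measureReal_max_lt, mul_min_of_nonneg _ _ (hr.le.trans hrt),
    mul_measureReal_rpow_lt hα hX hr hrt, mul_measureReal_rpow_lt hα hX hs hst]

lemma tendsto_mul_measureReal_rpow_lt_inter [IsFiniteMeasure μ] {V : Ω → ℝ} {g : ℝ → ℝ}
    (hα : 0 < α) (hX : ∀ z, 1 ≤ z → μ.real {ω | z < X ω} = z ^ (-α)) (hV : Measurable V)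
    (hind : IndepFun X V μ) (hg : Tendsto g atTop atTop) {x : ℝ} (hx : 0 < x) :
    Tendsto (fun t => t * μ.real ({ω | (t / x) ^ (1 / α) < X ω} ∩ {ω | g t < V ω}))
      atTop (𝓝 0) := by
  have h := ((tendsto_measureReal_lt_atTop (μ := μ) hV).comp hg).const_mul x
  rw [mul_zero] at h
  refine h.congr' ?_
  filter_upwards [eventually_ge_atTop x] with t ht
  have hprod : μ.real ({ω | (t / x) ^ (1 / α) < X ω} ∩ {ω | g t < V ω}) =
      μ.real {ω | (t / x) ^ (1 / α) < X ω} * μ.real {ω | g t < V ω} := by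
    simp only [measureReal_def]
    rw [← ENNReal.toReal_mul]
    exact congrArg ENNReal.toReal
      (hind.measure_inter_preimage_eq_mul _ _ measurableSet_Ioi measurableSet_Ioi)
  rw [Function.comp_apply, hprod, ← mul_assoc, mul_measureReal_rpow_lt hα hX hx ht]

lemma measureReal_mul_max_le_of_pareto {c : ℝ} (hc0 : 0 < c) (hc1 : c < 1) (hα : 0 < α)
    {V : Ω → ℝ} (hind : IndepFun X V μ)
    (hX : ∀ u, μ.real {ω | X ω ≤ u} = if 1 ≤ u then 1 - u ^ (-α) else 0)
    (hV : ∀ u, μ.real {ω | V ω ≤ u} =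
      if 1 / c ≤ u then (1 - (c * u) ^ (-α)) / (1 - u ^ (-α)) else 0) (z : ℝ) :
    μ.real {ω | c * max (X ω) (V ω) ≤ z} = if 1 ≤ z then 1 - z ^ (-α) else 0 := by
  have hset :
      {ω | c * max (X ω) (V ω) ≤ z} = X ⁻¹' Set.Iic (z / c) ∩ V ⁻¹' Set.Iic (z / c) := by
    ext ω
    rw [Set.mem_ofPred_eq, ← le_div_iff₀' hc0, max_le_iff]
    rfl
  have hprod : μ.real {ω | c * max (X ω) (V ω) ≤ z} =
      μ.real {ω | X ω ≤ z / c} * μ.real {ω | V ω ≤ z / c} := by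
    simp only [hset, measureReal_def]
    rw [← ENNReal.toReal_mul]
    exact congrArg ENNReal.toReal
      (hind.measure_inter_preimage_eq_mul _ _ measurableSet_Iic measurableSet_Iic)
  have hz : 1 / c ≤ z / c ↔ 1 ≤ z := div_le_div_iff_of_pos_right hc0
  rw [hprod, hX, hV, mul_div_cancel₀ z hc0.ne']
  by_cases hz1 : 1 ≤ z
  · have hzc : 1 < z / c := (one_lt_div hc0).mpr (hc1.trans_le hz1)
    have hne : 1 - (z / c) ^ (-α) ≠ 0 :=
      (sub_pos.mpr (rpow_lt_one_of_one_lt_of_neg hzc (neg_neg_of_pos hα))).ne'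
    rw [if_pos hzc.le, if_pos (hz.mpr hz1), if_pos hz1, mul_div_cancel₀ _ hne]
  · rw [if_neg (mt hz.mp hz1), if_neg hz1, mul_zero]

end Pareto

section Copula

variable {Ω : Type*} [MeasurableSpace Ω] {μ : Measure Ω} {α c : ℝ} {Y W : ℕ → Ω → ℝ}

theorem tendsto_mul_measureReal_armax_joint_exceed [IsFiniteMeasure μ] (hα : 0 < α)
    (hc0 : 0 < c) (hc1 : c ≤ 1) (hrec : ∀ n ω, Y (n + 1) ω = c * max (Y n ω) (W (n + 1) ω))
    (n m : ℕ) (hYn : ∀ z, 1 ≤ z → μ.real {ω | z < Y n ω} = z ^ (-α))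
    (hW : ∀ j, Measurable (W (n + j + 1))) (hind : ∀ j, IndepFun (Y n) (W (n + j + 1)) μ)
    {x y : ℝ} (hx : 0 < x) (hy : 0 < y) :
    Tendsto
      (fun t => t * μ.real {ω | (t / x) ^ (1 / α) < Y n ω ∧ (t / y) ^ (1 / α) < Y (n + m) ω})
      atTop (𝓝 (min x (y * c ^ ((m : ℝ) * α)))) := by
  set s := y * c ^ ((m : ℝ) * α)
  have hs : 0 < s := by positivity
  let lower : ℝ → Set Ω := fun t => {ω | max ((t / x) ^ (1 / α)) ((t / s) ^ (1 / α)) < Y n ω}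
  let cross : ℕ → ℝ → Set Ω := fun j t =>
    {ω | (t / x) ^ (1 / α) < Y n ω} ∩ {ω | (t / y) ^ (1 / α) / c < W (n + j + 1) ω}
  have hquantile : ∀ t, 0 ≤ t → (t / y) ^ (1 / α) / c ^ m = (t / s) ^ (1 / α) :=
    fun t ht => rpow_one_div_div_pow hα hc0 ht hy m
  have hlower : ∀ᶠ t in atTop, t * μ.real (lower t) = min x s := by
    filter_upwards [eventually_ge_atTop x, eventually_ge_atTop s] with t hxt hst
    exact mul_measureReal_max_rpow_lt hα hYn hx hs hxt hst
  have hcross : ∀ j, Tendsto (fun t => t * μ.real (cross j t)) atTop (𝓝 0) := fun j =>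
    tendsto_mul_measureReal_rpow_lt_inter hα hYn (hW j) (hind j)
      (((tendsto_rpow_atTop (by positivity)).comp (tendsto_id.atTop_div_const hy)).atTop_div_const
        hc0) hx
  refine tendsto_of_tendsto_of_tendsto_of_le_of_le'
    (g := fun t => t * μ.real (lower t))
    (h := fun t => t * μ.real (lower t) + ∑ j ∈ Finset.range m, t * μ.real (cross j t))
    (tendsto_const_nhds.congr' (hlower.mono fun _ h => h.symm)) ?_ ?_ ?_
  · simpa using (tendsto_const_nhds.congr' (hlower.mono fun _ h => h.symm)).add
      (tendsto_finsetSum _ fun j _ => hcross j)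
  · filter_upwards [eventually_ge_atTop 0] with t ht
    simp only [lower, ← hquantile t ht]
    exact mul_le_mul_of_nonneg_left
      (measureReal_mono (subset_armax_joint_exceed hc0 hrec n m _ _)) ht
  · filter_upwards [eventually_ge_atTop 0] with t ht
    rw [← Finset.mul_sum, ← mul_add]
    refine mul_le_mul_of_nonneg_left ?_ ht
    calc _ ≤ μ.real (lower t ∪ ⋃ j ∈ Finset.range m, cross j t) := by
          simp only [lower, cross, ← hquantile t ht]
          exact measureReal_mono (armax_joint_exceed_subset hc0 hc1 hrec n m _ (by positivity))
      _ ≤ _ := (measureReal_union_le _ _).trans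
          (add_le_add_right (measureReal_biUnion_finset_le _ _) _)

end Copula

theorem stmt11_general
    {Ω : Type*} [MeasurableSpace Ω] (μ : Measure Ω) [IsProbabilityMeasure μ]
    (α c : ℝ) (hα : 0 < α) (hc0 : 0 < c) (hc1 : c < 1)
    (Y W : ℕ → Ω → ℝ)
    (hWm : ∀ n, Measurable (W n)) (hY0m : Measurable (Y 0))
    -- the innovations together with the initial value form an independent family
    (Z : ℕ → Ω → ℝ) (hZ0 : Z 0 = Y 0) (hZS : ∀ n, Z (n + 1) = W (n + 1))
    (hiid : iIndepFun Z μ)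
    -- ARMAX recursion
    (hrec : ∀ n ω, Y (n + 1) ω = c * max (Y n ω) (W (n + 1) ω))
    (hWcdf : ∀ n ≥ 1, ∀ x, (μ {ω | W n ω ≤ x}).toReal =
      if 1 / c ≤ x then (1 - (c * x) ^ (-α)) / (1 - x ^ (-α)) else 0)
    (hY0cdf : ∀ x, (μ {ω | Y 0 ω ≤ x}).toReal = if 1 ≤ x then 1 - x ^ (-α) else 0)
    (m : ℕ) (x y : ℝ) (hx : 0 < x) (hy : 0 < y) :
    Tendsto (fun t : ℝ => t * (μ {ω | Y 1 ω > (t / x) ^ (1 / α)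
        ∧ Y (1 + m) ω > (t / y) ^ (1 / α)}).toReal)
      atTop (nhds (min x (y * c ^ ((m : ℝ) * α)))) := by
  simp only [← measureReal_def] at hWcdf hY0cdf
  have hZm : ∀ n, Measurable (Z n) := by
    rintro (_ | n)
    · rw [hZ0]; exact hY0m
    · rw [hZS]; exact hWm _
  have hY1 : Y 1 = fun ω => c * max (Z 0 ω) (Z 1 ω) := funext fun ω => by rw [hrec, hZ0, hZS]
  have hY1m : Measurable (Y 1) := by
    rw [hY1]; exact measurable_const.mul ((hZm 0).max (hZm 1))
  have hY1tail : ∀ z, 1 ≤ z → μ.real {ω | z < Y 1 ω} = z ^ (-α) := by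
    intro z hz
    have hind : IndepFun (Z 0) (Z 1) μ := hiid.indepFun zero_ne_one
    rw [measureReal_lt_eq_one_sub hY1m, hY1, measureReal_mul_max_le_of_pareto hc0 hc1 hα hind
      (by rwa [hZ0]) (by rw [hZS 0]; exact hWcdf 1 le_rfl), if_pos hz, sub_sub_cancel]
  have hind : ∀ j, IndepFun (Y 1) (W (1 + j + 1)) μ := by
    intro j
    have h := (hiid.indepFun_prodMk hZm 0 1 (j + 2) (by omega) (by omega)).comp
      (φ := fun p : ℝ × ℝ => c * max p.1 p.2)
      (measurable_const.mul (measurable_fst.max measurable_snd)) measurable_id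
    rw [hY1, show 1 + j + 1 = j + 1 + 1 by omega, ← hZS]
    exact h
  exact tendsto_mul_measureReal_armax_joint_exceed hα hc0 hc1.le hrec 1 m hY1tail
    (fun j => hWm _) hind hx hy

theorem stmt11
    {Ω : Type*} [MeasurableSpace Ω] (μ : Measure Ω) [IsProbabilityMeasure μ]
    (α c : ℝ) (hα : 0 < α) (hc0 : 0 < c) (hc1 : c < 1)
    (Y W : ℕ → Ω → ℝ)
    (hWm : ∀ n, Measurable (W n)) (hY0m : Measurable (Y 0))
    -- the innovations together with the initial value form an independent family
    (Z : ℕ → Ω → ℝ) (hZ0 : Z 0 = Y 0) (hZS : ∀ n, Z (n + 1) = W (n + 1))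
    (hiid : iIndepFun Z μ)
    -- ARMAX recursion
    (hrec : ∀ n ω, Y (n + 1) ω = c * max (Y n ω) (W (n + 1) ω))
    (hWcdf : ∀ n ≥ 1, ∀ x, (μ {ω | W n ω ≤ x}).toReal =
      if 1 / c ≤ x then (1 - (c * x) ^ (-α)) / (1 - x ^ (-α)) else 0)
    (hY0cdf : ∀ x, (μ {ω | Y 0 ω ≤ x}).toReal = if 1 ≤ x then 1 - x ^ (-α) else 0)
    (m : ℕ) (hm : 1 ≤ m) (x y : ℝ) (hx : 0 < x) (hy : 0 < y) :
    Tendsto (fun t : ℝ => t * (μ {ω | Y 1 ω > (t / x) ^ (1 / α)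
        ∧ Y (1 + m) ω > (t / y) ^ (1 / α)}).toReal)
      atTop (nhds (min x (y * c ^ ((m : ℝ) * α)))) :=
  stmt11_general μ α c hα hc0 hc1 Y W hWm hY0m Z hZ0 hZS hiid hrec hWcdf hY0cdf m x y hx hy
end

section
/- Let Z be a positive random variable with cdf H(x) = exp(-δ x^{-ξ}) (Fréchet(δ,ξ)), with ξ > α > 0, δ > 0. Then for any positive reals a_1,...,a_d, E[ (Z^α / H(Z)) · ∏_{i=1}^d H(a_i Z) ] = (Σ_{i=1}^d a_i^{-ξ})^{-1} · (δ Σ_{i=1}^d a_i^{-ξ})^{α/ξ} · Γ(1 - α/ξ). -/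
open MeasureTheory ProbabilityTheory Filter Real

/-! If `Z` is Fréchet(δ, ξ), then `W = Z ^ (-ξ)` is exponential with rate `δ`, because
`P(W ≥ t) = P(Z ≤ t ^ (-1/ξ)) = exp (-δ t)`. In terms of `W`, `Z ^ α = W ^ (-α/ξ)`,
`1 / H(Z) = exp (δ W)` and `∏ H(aᵢ Z) = exp (-δ S W)` with `S = ∑ aᵢ ^ (-ξ)`, so the expectation
is `δ ∫₀^∞ t ^ (-α/ξ) exp (-δ S t) dt`, a Gamma integral. -/

lemma expMeasure_Ici {r t : ℝ} (hr : 0 < r) (ht : 0 ≤ t) :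
    expMeasure r (Set.Ici t) = ENNReal.ofReal (exp (-(r * t))) := by
  have := isProbabilityMeasure_expMeasure hr
  have : NullSingletonClass (expMeasure r) := nullSingletonClass_withDensity _
  have hIic : expMeasure r (Set.Iic t) = ENNReal.ofReal (1 - exp (-(r * t))) := by
    rw [← ENNReal.ofReal_toReal (measure_ne_top _ _), ← measureReal_def, ← cdf_eq_real,
      cdf_expMeasure_eq hr, if_pos ht]
  have hexp : exp (-(r * t)) ≤ 1 := exp_le_one_iff.mpr (by nlinarith)
  rw [← Set.compl_Iio, prob_compl_eq_one_sub measurableSet_Iio, measure_congr Iio_ae_eq_Iic,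
    hIic, ← ENNReal.ofReal_one, ← ENNReal.ofReal_sub _ (sub_nonneg.mpr hexp), sub_sub_cancel]

lemma measure_Ici_eq_one_of_nonpos {ν : Measure ℝ} [IsProbabilityMeasure ν] {t : ℝ}
    (hν : ν (Set.Ici 0) = 1) (ht : t ≤ 0) : ν (Set.Ici t) = 1 :=
  le_antisymm prob_le_one (hν ▸ measure_mono (Set.Ici_subset_Ici.mpr ht))

lemma map_eq_expMeasure_of_measure_setOf_le {Ω : Type*} [MeasurableSpace Ω] {μ : Measure Ω}
    [IsProbabilityMeasure μ] {W : Ω → ℝ} (hW : AEMeasurable W μ) {r : ℝ} (hr : 0 < r)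
    (hW0 : ∀ᵐ ω ∂μ, 0 ≤ W ω)
    (hsurv : ∀ t > 0, μ {ω | t ≤ W ω} = ENNReal.ofReal (exp (-(r * t)))) :
    μ.map W = expMeasure r := by
  have := isProbabilityMeasure_expMeasure hr
  have := Measure.isProbabilityMeasure_map (μ := μ) hW
  refine Measure.ext_of_Ici _ _ fun t => ?_
  rcases lt_or_ge 0 t with ht | ht
  · rw [Measure.map_apply_of_aemeasurable hW measurableSet_Ici]
    exact (hsurv t ht).trans (expMeasure_Ici hr ht.le).symm
  · have hmap : μ.map W (Set.Ici 0) = 1 := by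
      refine (prob_compl_eq_zero_iff measurableSet_Ici).mp (ae_iff.mp ?_)
      exact (ae_map_iff hW measurableSet_Ici).mpr hW0
    have hexp : expMeasure r (Set.Ici 0) = 1 := by simp [expMeasure_Ici hr le_rfl]
    rw [measure_Ici_eq_one_of_nonpos hmap ht, measure_Ici_eq_one_of_nonpos hexp ht]

lemma integral_expMeasure {E : Type*} [NormedAddCommGroup E] [NormedSpace ℝ E] {r : ℝ}
    (hr : 0 < r) (f : ℝ → E) :
    ∫ t, f t ∂expMeasure r = ∫ t in Set.Ioi 0, (r * exp (-(r * t))) • f t := by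
  have hdens : expMeasure r = volume.withDensity fun t => ENNReal.ofReal (exponentialPDFReal r t) :=
    rfl
  rw [hdens, integral_withDensity_eq_integral_toReal_smul
    (measurable_exponentialPDFReal r).ennreal_ofReal (ae_of_all _ fun _ => ENNReal.ofReal_lt_top),
    ← integral_Ici_eq_integral_Ioi, ← integral_indicator measurableSet_Ici]
  congr 1 with t
  rw [ENNReal.toReal_ofReal (exponentialPDFReal_nonneg hr t)]
  by_cases ht : 0 ≤ t <;> simp [ht, exponentialPDFReal, gammaPDFReal]

/-- At `c = 0` both sides vanish: the integral of the non-integrable `t ^ (-p)` and `0⁻¹`. -/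
lemma integral_rpow_neg_mul_exp_neg_mul_Ioi {p c : ℝ} (hp : p < 1) (hc : 0 ≤ c) :
    ∫ t in Set.Ioi 0, t ^ (-p) * exp (-(c * t)) = c⁻¹ * c ^ p * Gamma (1 - p) := by
  rcases hc.eq_or_lt with rfl | hc
  · simp [setIntegral_Ioi_zero_rpow]
  · have h := integral_rpow_mul_exp_neg_mul_Ioi (a := 1 - p) (by linarith) hc
    rw [sub_sub_cancel_left] at h
    rw [h, one_div, inv_rpow hc.le, ← rpow_neg hc.le, neg_sub,
      rpow_sub_one hc.ne', div_eq_inv_mul]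

lemma prod_exp_neg_mul_mul_rpow_neg {ι : Type*} [Fintype ι] {δ ξ z : ℝ} (hz : 0 ≤ z)
    {a : ι → ℝ} (ha : ∀ i, 0 ≤ a i) :
    ∏ i, exp (-δ * (a i * z) ^ (-ξ)) = exp (-(δ * ∑ i, a i ^ (-ξ)) * z ^ (-ξ)) := by
  rw [← exp_sum, Finset.mul_sum, ← Finset.sum_neg_distrib, Finset.sum_mul]
  congr 1
  refine Finset.sum_congr rfl fun i _ => ?_
  rw [mul_rpow (ha i) hz]
  ring

lemma rpow_eq_rpow_neg_rpow_div {z α ξ : ℝ} (hz : 0 ≤ z) (hξ : ξ ≠ 0) :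
    z ^ α = (z ^ (-ξ)) ^ (-(α / ξ)) := by
  rw [← rpow_mul hz]
  congr 1
  field_simp

lemma map_rpow_neg_eq_expMeasure {Ω : Type*} [MeasurableSpace Ω] {μ : Measure Ω}
    [IsProbabilityMeasure μ] {δ ξ : ℝ} (hδ : 0 < δ) (hξ : 0 < ξ) {Z : Ω → ℝ}
    (hZm : Measurable Z) (hZpos : ∀ᵐ ω ∂μ, 0 < Z ω)
    (hcdf : ∀ x > (0 : ℝ), (μ {ω | Z ω ≤ x}).toReal = exp (-δ * x ^ (-ξ))) :
    μ.map (fun ω => Z ω ^ (-ξ)) = expMeasure δ := by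
  refine map_eq_expMeasure_of_measure_setOf_le (hZm.pow_const _).aemeasurable hδ
    (hZpos.mono fun ω hω => rpow_nonneg hω.le _) fun t ht => ?_
  have hset : {ω | t ≤ Z ω ^ (-ξ)} =ᵐ[μ] {ω | Z ω ≤ t ^ (-ξ)⁻¹} :=
    hZpos.mono fun ω hω => propext (le_rpow_inv_iff_of_neg hω ht (by linarith)).symm
  rw [measure_congr hset, ← ENNReal.ofReal_toReal (measure_ne_top _ _),
    hcdf _ (rpow_pos_of_pos ht _), rpow_inv_rpow ht.le (by linarith), neg_mul]

theorem stmt12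
    {Ω : Type*} [MeasurableSpace Ω] (μ : Measure Ω) [IsProbabilityMeasure μ]
    (δ ξ α : ℝ) (hδ : 0 < δ) (hα : 0 < α) (hαξ : α < ξ)
    (Z : Ω → ℝ) (hZm : Measurable Z) (hZpos : ∀ᵐ ω ∂μ, 0 < Z ω)
    -- Z is Fréchet(δ, ξ) distributed
    (hcdf : ∀ x > (0 : ℝ), (μ {ω | Z ω ≤ x}).toReal = Real.exp (-δ * x ^ (-ξ)))
    (d : ℕ) (a : Fin d → ℝ) (ha : ∀ i, 0 < a i) :
    ∫ ω, (Z ω ^ α / Real.exp (-δ * Z ω ^ (-ξ))) *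
        ∏ i, Real.exp (-δ * (a i * Z ω) ^ (-ξ)) ∂μ
      = (∑ i, a i ^ (-ξ))⁻¹ * (δ * ∑ i, a i ^ (-ξ)) ^ (α / ξ) *
          Real.Gamma (1 - α / ξ) := by
  have hξ : 0 < ξ := hα.trans hαξ
  set S := ∑ i, a i ^ (-ξ)
  have hS : 0 ≤ S := Finset.sum_nonneg fun i _ => rpow_nonneg (ha i).le _
  let F : ℝ → ℝ := fun w => w ^ (-(α / ξ)) * exp (δ * w) * exp (-(δ * S) * w)
  calc _ = ∫ ω, F (Z ω ^ (-ξ)) ∂μ := by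
        refine integral_congr_ae (hZpos.mono fun ω hω => ?_)
        dsimp only [F]
        rw [prod_exp_neg_mul_mul_rpow_neg hω.le fun i => (ha i).le,
          rpow_eq_rpow_neg_rpow_div hω.le hξ.ne', div_eq_mul_inv, ← exp_neg, neg_mul, neg_neg]
    _ = ∫ w, F w ∂expMeasure δ := by
        rw [← map_rpow_neg_eq_expMeasure hδ hξ hZm hZpos hcdf,
          integral_map (hZm.pow_const _).aemeasurable (by fun_prop)]
    _ = δ * ∫ t in Set.Ioi 0, t ^ (-(α / ξ)) * exp (-(δ * S * t)) := by
        rw [integral_expMeasure hδ, ← integral_const_mul]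
        refine setIntegral_congr_fun measurableSet_Ioi fun t _ => ?_
        have hcancel : exp (-(δ * t)) * exp (δ * t) = 1 := by
          rw [← exp_add, neg_add_cancel, exp_zero]
        simp only [F, smul_eq_mul, neg_mul]
        linear_combination (δ * t ^ (-(α / ξ)) * exp (-(δ * S * t))) * hcancel
    _ = _ := by
        rw [integral_rpow_neg_mul_exp_neg_mul_Ioi ((div_lt_one hξ).mpr hαξ) (mul_nonneg hδ.le hS),
          mul_inv]
        field_simp
end
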